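/- Let R be a ring, b ∈ Z(R) a nilpotent central element, l ≥ 1, z ∈ Z(R) a central non-zero-divisor, and φ a ring automorphism of R with φ^l(z) − z ∈ bR. Then for every left module M over the generalized Weyl algebra H(R, φ^l, z) on which the generator x acts locally nilpotently, the element z acts locally nilpotently on M: for every m ∈ M there exists n with zⁿ·m = 0. -/

import Mathlib

universe u

variable (R : Type u) [Ring R] (φ : R ≃+* R) (z : R)

/-- The defining relations of the generalized Weyl algebra `H(R, φ, z)`, presented as a quotient
of the free `ℤ`-algebra on the underlying set of `R` together with two generators `x` (encoded
as `Sum.inr 0`) and `y` (encoded as `Sum.inr 1`).  The first three families of relations encode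
the ring structure of `R`; the remaining ones are the GWA relations
`yx = z`, `xy = φ⁻¹(z)`, `xr = φ⁻¹(r)x`, `yr = φ(r)y`. -/
inductive GWARel : FreeAlgebra ℤ (R ⊕ Fin 2) → FreeAlgebra ℤ (R ⊕ Fin 2) → Prop
  | add (r s : R) : GWARel
      (FreeAlgebra.ι ℤ (Sum.inl r) + FreeAlgebra.ι ℤ (Sum.inl s))
      (FreeAlgebra.ι ℤ (Sum.inl (r + s)))
  | mul (r s : R) : GWARel
      (FreeAlgebra.ι ℤ (Sum.inl r) * FreeAlgebra.ι ℤ (Sum.inl s))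
      (FreeAlgebra.ι ℤ (Sum.inl (r * s)))
  | one : GWARel (FreeAlgebra.ι ℤ (Sum.inl (1 : R))) 1
  | yx : GWARel (FreeAlgebra.ι ℤ (Sum.inr 1) * FreeAlgebra.ι ℤ (Sum.inr 0))
      (FreeAlgebra.ι ℤ (Sum.inl z))
  | xy : GWARel (FreeAlgebra.ι ℤ (Sum.inr 0) * FreeAlgebra.ι ℤ (Sum.inr 1))
      (FreeAlgebra.ι ℤ (Sum.inl (φ.symm z)))
  | xr (r : R) : GWARel (FreeAlgebra.ι ℤ (Sum.inr 0) * FreeAlgebra.ι ℤ (Sum.inl r))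
      (FreeAlgebra.ι ℤ (Sum.inl (φ.symm r)) * FreeAlgebra.ι ℤ (Sum.inr 0))
  | yr (r : R) : GWARel (FreeAlgebra.ι ℤ (Sum.inr 1) * FreeAlgebra.ι ℤ (Sum.inl r))
      (FreeAlgebra.ι ℤ (Sum.inl (φ r)) * FreeAlgebra.ι ℤ (Sum.inr 1))

/-- The generalized Weyl algebra `H(R, φ, z)`. -/
abbrev GWA : Type u := RingQuot (GWARel R φ z)

/-- The generator `x` of the generalized Weyl algebra. -/
noncomputable def GWA.X : GWA R φ z :=
  RingQuot.mkRingHom (GWARel R φ z) (FreeAlgebra.ι ℤ (Sum.inr 0))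

/-- The generator `y` of the generalized Weyl algebra. -/
noncomputable def GWA.Y : GWA R φ z :=
  RingQuot.mkRingHom (GWARel R φ z) (FreeAlgebra.ι ℤ (Sum.inr 1))

/-- The canonical ring homomorphism `R → H(R, φ, z)`. -/
noncomputable def GWA.ofBase : R →+* GWA R φ z where
  toFun r := RingQuot.mkRingHom (GWARel R φ z) (FreeAlgebra.ι ℤ (Sum.inl r))
  map_one' := by
    have := RingQuot.mkRingHom_rel (GWARel.one (R := R) (φ := φ) (z := z))
    simpa using this
  map_mul' r s := by
    have := RingQuot.mkRingHom_rel (GWARel.mul (φ := φ) (z := z) r s)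
    simp only [map_mul] at this
    exact this.symm
  map_zero' := by
    have := RingQuot.mkRingHom_rel (GWARel.add (φ := φ) (z := z) 0 0)
    simp only [map_add, add_zero] at this
    exact add_eq_left.mp this
  map_add' r s := by
    have := RingQuot.mkRingHom_rel (GWARel.add (φ := φ) (z := z) r s)
    simp only [map_add] at this
    exact this.symm

/-!
Write `ψ = φˡ`. Since `yx = z` and `y r = ψ(r) y`, an element `m` killed by `xⁿ⁺¹` yields, by
induction applied to `x m`, a relation `ψ(z)ᵏ z m = 0`. As `ψ(z) - z = b r` is nilpotent (`b` is
central and nilpotent) and commutes with `z`, some power of `z` is a left multiple of `ψ(z)ᵏ`, so a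
power of `z` kills `z m`.
-/

theorem Commute.exists_pow_smul_eq_zero_of_isNilpotent_sub {A M : Type*} [Ring A]
    [AddCommGroup M] [Module A M] {a c : A} (hac : Commute a c) (hnil : IsNilpotent (c - a))
    {m : M} {k : ℕ} (hk : c ^ k • m = 0) : ∃ n : ℕ, a ^ n • m = 0 := by
  obtain ⟨N, hN⟩ := hnil
  -- Divisibility in `Aᵐᵒᵖ` is left divisibility in `A`, which is what acts on `m`.
  have hdvd : MulOpposite.op c ^ k ∣ MulOpposite.op a ^ (N + k) :=
    hac.op.symm.pow_dvd_pow_of_sub_pow_eq_zero (N + k).le_succ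
      (by rw [← MulOpposite.op_sub, ← MulOpposite.op_pow, hN, MulOpposite.op_zero])
  obtain ⟨q, hq⟩ := hdvd
  refine ⟨N + k, ?_⟩
  rw [← MulOpposite.op_pow, ← MulOpposite.op_pow, ← MulOpposite.op_unop q,
    ← MulOpposite.op_mul, MulOpposite.op_inj] at hq
  rw [hq, mul_smul, hk, smul_zero]

namespace GWA

variable {R φ z}

theorem Y_mul_X : Y R φ z * X R φ z = ofBase R φ z z :=
  (map_mul _ _ _).symm.trans (RingQuot.mkRingHom_rel GWARel.yx)

theorem Y_mul_ofBase (r : R) : Y R φ z * ofBase R φ z r = ofBase R φ z (φ r) * Y R φ z :=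
  (map_mul _ _ _).symm.trans ((RingQuot.mkRingHom_rel (GWARel.yr r)).trans (map_mul _ _ _))

theorem exists_pow_smul_eq_zero_of_X_pow_smul_eq_zero (hcomm : Commute z (φ z))
    (hnil : IsNilpotent (φ z - z)) {M : Type*} [AddCommGroup M] [Module (GWA R φ z) M]
    (n : ℕ) : ∀ m : M, X R φ z ^ n • m = 0 → ∃ k : ℕ, ofBase R φ z z ^ k • m = 0 := by
  induction n with
  | zero => exact fun m hm => ⟨0, by rwa [pow_zero] at hm ⊢⟩
  | succ n ih =>
    intro m hm
    obtain ⟨k, hk⟩ := ih (X R φ z • m) (by rwa [← mul_smul, ← pow_succ])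
    have hφk : ofBase R φ z (φ z) ^ k • ofBase R φ z z • m = 0 := by
      rw [← Y_mul_X, mul_smul, ← mul_smul, ← map_pow, ← map_pow, ← Y_mul_ofBase, mul_smul,
        map_pow, hk, smul_zero]
    obtain ⟨j, hj⟩ := (hcomm.map (ofBase R φ z)).exists_pow_smul_eq_zero_of_isNilpotent_sub
      (by simpa only [map_sub] using hnil.map (ofBase R φ z)) hφk
    exact ⟨j + 1, by rwa [pow_succ, mul_smul]⟩

end GWA

theorem statement15 (b : R) (hb : b ∈ Set.center R) (hbnil : IsNilpotent b)
    (l : ℕ) (hz : z ∈ Set.center R)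
    (hφl : ∃ r : R, (φ ^ l) z - z = b * r)
    (M : Type u) [AddCommGroup M] [Module (GWA R (φ ^ l) z) M]
    (hM : ∀ m : M, ∃ n : ℕ, (GWA.X R (φ ^ l) z) ^ n • m = 0) :
    ∀ m : M, ∃ n : ℕ, (GWA.ofBase R (φ ^ l) z z) ^ n • m = 0 := by
  intro m
  obtain ⟨n, hn⟩ := hM m
  obtain ⟨r, hr⟩ := hφl
  have hbr : Commute b r := (Set.mem_center_iff.mp hb).comm r
  exact GWA.exists_pow_smul_eq_zero_of_X_pow_smul_eq_zero ((Set.mem_center_iff.mp hz).comm _)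
    (hr ▸ hbr.isNilpotent_mul_right hbnil) n m hn
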